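/- Under the hypotheses of the perturbed-chain bound, the Cesàro average of the marginals satisfies \(\left\|\mu - \frac{1}{M}\sum_{t=0}^{M-1} \nu \hat P_0 \hat P_1 \cdots \hat P_t \right\|_{TV} \le \frac{(1-(1-\alpha)^M)\|\mu-\nu\|_{TV}}{M\alpha} - \frac{\epsilon(1-(1-\alpha)^M)}{M\alpha^2} + \frac{\epsilon}{\alpha}\), where \(\hat P_0\) is the identity kernel. -/

import Mathlib

/-!
A kernel whose rows are pairwise within `1 - α` in total variation contracts total
variation by `1 - α`: for each set `A` the function `θ ↦ P θ A` oscillates by at most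
`1 - α`, and integrating it against `μ - ρ`, split by a Hahn decomposition, costs at most
that oscillation times `tvDist μ ρ`. Replacing `P` by an `ε`-close kernel adds `ε`, and
`μ P = μ`, so the distance `d t` of the `t`-th marginal to `μ` satisfies
`d (t + 1) ≤ (1 - α) d t + ε`. Unrolling gives a geometric bound on `d t`, and total
variation is convex in its second argument, so the distance of the Cesàro average is at most
the average of these bounds.
-/

open MeasureTheory

noncomputable def tvDist {Θ : Type*} [MeasurableSpace Θ] (μ ν : Measure Θ) : ℝ :=
  sSup {r : ℝ | ∃ A : Set Θ, MeasurableSet A ∧ r = |(μ A).toReal - (ν A).toReal|}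

/-- `iterBind ν Ps t` is the marginal `ν P̂₀ P̂₁ ⋯ P̂_t` (with `P̂₀ = I`) of the
inhomogeneous chain at time `t`. -/
noncomputable def iterBind {Θ : Type*} [MeasurableSpace Θ]
    (ν : Measure Θ) (Ps : ℕ → Θ → Measure Θ) : ℕ → Measure Θ
  | 0 => ν
  | n + 1 => (iterBind ν Ps n).bind (Ps (n + 1))

open scoped ENNReal
open Finset

section TotalVariation

variable {Θ : Type*} [MeasurableSpace Θ] {μ ν ρ : Measure Θ} {A : Set Θ} {c : ℝ}

lemma tvDist_nonneg (μ ν : Measure Θ) : 0 ≤ tvDist μ ν :=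
  Real.sSup_nonneg (by rintro _ ⟨A, -, rfl⟩; exact abs_nonneg _)

lemma tvDist_comm (μ ν : Measure Θ) : tvDist μ ν = tvDist ν μ := by
  simp only [tvDist, abs_sub_comm]

lemma tvDist_le_of_forall_abs_le (hc : 0 ≤ c)
    (h : ∀ A, MeasurableSet A → |μ.real A - ν.real A| ≤ c) : tvDist μ ν ≤ c :=
  Real.sSup_le (by rintro _ ⟨A, hA, rfl⟩; exact h A hA) hc

lemma abs_sub_le_tvDist [IsFiniteMeasure μ] [IsFiniteMeasure ν] (hA : MeasurableSet A) :
    |μ.real A - ν.real A| ≤ tvDist μ ν := by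
  refine le_csSup ⟨μ.real .univ + ν.real .univ, ?_⟩ ⟨A, hA, rfl⟩
  rintro _ ⟨B, -, rfl⟩
  calc |μ.real B - ν.real B| ≤ |μ.real B| + |ν.real B| := abs_sub _ _
    _ ≤ μ.real .univ + ν.real .univ := by
      rw [abs_of_nonneg measureReal_nonneg, abs_of_nonneg measureReal_nonneg]
      exact add_le_add (measureReal_mono (μ := μ) (Set.subset_univ B))
        (measureReal_mono (μ := ν) (Set.subset_univ B))

lemma measure_le_add_tvDist [IsFiniteMeasure μ] [IsFiniteMeasure ν] (hA : MeasurableSet A) :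
    μ A ≤ ν A + ENNReal.ofReal (tvDist μ ν) := by
  rw [← ofReal_measureReal (measure_ne_top μ A), ← ofReal_measureReal (measure_ne_top ν A),
    ← ENNReal.ofReal_add measureReal_nonneg (tvDist_nonneg μ ν)]
  gcongr
  linarith [le_abs_self (μ.real A - ν.real A), abs_sub_le_tvDist (μ := μ) (ν := ν) hA]

/-- For probability measures one-sided bounds suffice, by passing to complements. -/
lemma tvDist_le_of_forall_le_add [IsProbabilityMeasure μ] [IsProbabilityMeasure ν]
    (hc : 0 ≤ c) (h : ∀ A, MeasurableSet A → μ A ≤ ν A + ENNReal.ofReal c) : tvDist μ ν ≤ c := by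
  have hreal : ∀ A, MeasurableSet A → μ.real A ≤ ν.real A + c := fun A hA => by
    have := ENNReal.toReal_mono (by finiteness) (h A hA)
    rwa [ENNReal.toReal_add (measure_ne_top _ _) ENNReal.ofReal_ne_top,
      ENNReal.toReal_ofReal hc] at this
  refine tvDist_le_of_forall_abs_le hc fun A hA => abs_sub_le_iff.2 ⟨?_, ?_⟩
  · linarith [hreal A hA]
  · have := hreal Aᶜ hA.compl
    rw [probReal_compl_eq_one_sub hA, probReal_compl_eq_one_sub hA] at this
    linarith

lemma tvDist_triangle [IsFiniteMeasure μ] [IsFiniteMeasure ν] [IsFiniteMeasure ρ] :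
    tvDist μ ν ≤ tvDist μ ρ + tvDist ρ ν := by
  refine tvDist_le_of_forall_abs_le (add_nonneg (tvDist_nonneg _ _) (tvDist_nonneg _ _))
    fun A hA => ?_
  calc |μ.real A - ν.real A| ≤ |μ.real A - ρ.real A| + |ρ.real A - ν.real A| :=
        abs_sub_le _ _ _
    _ ≤ tvDist μ ρ + tvDist ρ ν := add_le_add (abs_sub_le_tvDist hA) (abs_sub_le_tvDist hA)

lemma tvDist_inv_card_smul_sum_le {ι : Type*} {s : Finset ι} (hs : s.Nonempty)
    [IsFiniteMeasure μ] (ν : ι → Measure Θ) [∀ i, IsFiniteMeasure (ν i)] :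
    tvDist μ ((#s : ℝ≥0∞)⁻¹ • ∑ i ∈ s, ν i) ≤ (#s : ℝ)⁻¹ * ∑ i ∈ s, tvDist μ (ν i) := by
  have hs' : (#s : ℝ) ≠ 0 := by exact_mod_cast hs.card_pos.ne'
  refine tvDist_le_of_forall_abs_le
    (mul_nonneg (by positivity) (sum_nonneg fun i _ => tvDist_nonneg _ _)) fun A hA => ?_
  have hνA : ((∑ i ∈ s, ν i).real A) = ∑ i ∈ s, (ν i).real A := by
    rw [measureReal_def, Measure.finsetSum_apply,
      ENNReal.toReal_sum fun i _ => measure_ne_top _ _]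
    rfl
  have hμA : μ.real A = (#s : ℝ)⁻¹ * ∑ _i ∈ s, μ.real A := by
    rw [sum_const, nsmul_eq_mul, inv_mul_cancel_left₀ hs']
  rw [measureReal_ennreal_smul_apply, ENNReal.toReal_inv, ENNReal.toReal_natCast, hνA, hμA,
    ← mul_sub, ← sum_sub_distrib, abs_mul, abs_of_nonneg (by positivity)]
  gcongr
  exact (abs_sum_le_sum_abs _ _).trans (sum_le_sum fun i _ => abs_sub_le_tvDist hA)

end TotalVariation

section Kernel

variable {Θ : Type*} [MeasurableSpace Θ] {μ ρ : Measure Θ}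

lemma exists_le_add_measure_univ_le_tvDist [IsFiniteMeasure μ] [IsFiniteMeasure ρ] :
    ∃ η : Measure Θ, μ ≤ ρ + η ∧ η .univ ≤ ENNReal.ofReal (tvDist μ ρ) := by
  obtain ⟨S, hS, hρμ, hμρ⟩ := hahn_decomposition μ ρ
  have hS_le : ρ.restrict S ≤ μ.restrict S := Measure.le_iff.2 fun s hs => by
    simpa only [Measure.restrict_apply hs] using hρμ _ (hs.inter hS) Set.inter_subset_right
  have hSc_le : μ.restrict Sᶜ ≤ ρ.restrict Sᶜ := Measure.le_iff.2 fun s hs => by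
    simpa only [Measure.restrict_apply hs] using
      hμρ _ (hs.inter hS.compl) Set.inter_subset_right
  refine ⟨μ.restrict S - ρ.restrict S, ?_, ?_⟩
  · calc μ = (μ.restrict S - ρ.restrict S) + ρ.restrict S + μ.restrict Sᶜ := by
          rw [Measure.sub_add_cancel_of_le hS_le, Measure.restrict_add_restrict_compl hS]
      _ ≤ (μ.restrict S - ρ.restrict S) + ρ.restrict S + ρ.restrict Sᶜ := by gcongr
      _ = ρ + (μ.restrict S - ρ.restrict S) := by
          rw [add_assoc, Measure.restrict_add_restrict_compl hS, add_comm]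
  · rw [Measure.sub_apply .univ hS_le, Measure.restrict_apply_univ, Measure.restrict_apply_univ,
      tsub_le_iff_left]
    exact measure_le_add_tvDist hS

lemma lintegral_le_lintegral_add_mul_tvDist_of_le [IsFiniteMeasure μ] [IsFiniteMeasure ρ]
    {g : Θ → ℝ≥0∞} {L : ℝ≥0∞} (hg : ∀ θ, g θ ≤ L) :
    ∫⁻ θ, g θ ∂μ ≤ ∫⁻ θ, g θ ∂ρ + L * ENNReal.ofReal (tvDist μ ρ) := by
  obtain ⟨η, hμη, hη⟩ := exists_le_add_measure_univ_le_tvDist (μ := μ) (ρ := ρ)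
  calc ∫⁻ θ, g θ ∂μ ≤ ∫⁻ θ, g θ ∂(ρ + η) := lintegral_mono' hμη le_rfl
    _ = ∫⁻ θ, g θ ∂ρ + ∫⁻ θ, g θ ∂η := lintegral_add_measure _ _ _
    _ ≤ ∫⁻ θ, g θ ∂ρ + L * η .univ := by
        gcongr
        exact (lintegral_mono hg).trans_eq (lintegral_const L)
    _ ≤ ∫⁻ θ, g θ ∂ρ + L * ENNReal.ofReal (tvDist μ ρ) := by gcongr

lemma lintegral_le_lintegral_add_mul_tvDist [IsProbabilityMeasure μ] [IsProbabilityMeasure ρ]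
    {f : Θ → ℝ≥0∞} {L : ℝ≥0∞} (hf : ∀ θ ζ, f θ ≤ f ζ + L) :
    ∫⁻ θ, f θ ∂μ ≤ ∫⁻ θ, f θ ∂ρ + L * ENNReal.ofReal (tvDist μ ρ) := by
  set m := ⨅ θ, f θ
  have hg : ∀ θ, f θ - m ≤ L := fun θ =>
    tsub_le_iff_left.2 (tsub_le_iff_right.1 (le_iInf fun ζ => tsub_le_iff_right.2 (hf θ ζ)))
  have hf_eq : ∀ (σ : Measure Θ) [IsProbabilityMeasure σ],
      ∫⁻ θ, f θ ∂σ = ∫⁻ θ, (f θ - m) ∂σ + m := fun σ _ => by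
    rw [← lintegral_congr fun θ => tsub_add_cancel_of_le (iInf_le f θ),
      lintegral_add_right _ measurable_const, lintegral_const, measure_univ, mul_one]
  rw [hf_eq μ, hf_eq ρ, add_right_comm]
  gcongr
  exact lintegral_le_lintegral_add_mul_tvDist_of_le hg

end Kernel

section Markov

variable {Θ : Type*} [MeasurableSpace Θ] {P Q : Θ → Measure Θ} {μ ρ : Measure Θ} {β ε : ℝ}

lemma tvDist_bind_le_mul_of_doeblin (hPm : Measurable P)
    (hP : ∀ θ, IsProbabilityMeasure (P θ)) (hβ : 0 ≤ β) (hD : ∀ θ ζ, tvDist (P θ) (P ζ) ≤ β)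
    [IsProbabilityMeasure μ] [IsProbabilityMeasure ρ] :
    tvDist (μ.bind P) (ρ.bind P) ≤ β * tvDist μ ρ := by
  have := isProbabilityMeasure_bind (m := μ) hPm.aemeasurable (ae_of_all _ hP)
  have := isProbabilityMeasure_bind (m := ρ) hPm.aemeasurable (ae_of_all _ hP)
  refine tvDist_le_of_forall_le_add (mul_nonneg hβ (tvDist_nonneg _ _)) fun A hA => ?_
  rw [Measure.bind_apply hA hPm.aemeasurable, Measure.bind_apply hA hPm.aemeasurable,
    ENNReal.ofReal_mul hβ]
  refine lintegral_le_lintegral_add_mul_tvDist fun θ ζ =>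
    (measure_le_add_tvDist (μ := P θ) (ν := P ζ) hA).trans ?_
  gcongr
  exact hD θ ζ

lemma tvDist_bind_le_of_forall_tvDist_le (hPm : Measurable P) (hQm : Measurable Q)
    (hP : ∀ θ, IsProbabilityMeasure (P θ)) (hQ : ∀ θ, IsProbabilityMeasure (Q θ))
    (hε : 0 ≤ ε) (hPQ : ∀ θ, tvDist (Q θ) (P θ) ≤ ε) [IsProbabilityMeasure ρ] :
    tvDist (ρ.bind P) (ρ.bind Q) ≤ ε := by
  have := isProbabilityMeasure_bind (m := ρ) hPm.aemeasurable (ae_of_all _ hP)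
  have := isProbabilityMeasure_bind (m := ρ) hQm.aemeasurable (ae_of_all _ hQ)
  refine tvDist_le_of_forall_le_add hε fun A hA => ?_
  rw [Measure.bind_apply hA hPm.aemeasurable, Measure.bind_apply hA hQm.aemeasurable]
  calc ∫⁻ θ, P θ A ∂ρ ≤ ∫⁻ θ, (Q θ A + ENNReal.ofReal ε) ∂ρ := by
        refine lintegral_mono fun θ =>
          (measure_le_add_tvDist (μ := P θ) (ν := Q θ) hA).trans ?_
        rw [tvDist_comm]
        gcongr
        exact hPQ θ
    _ = ∫⁻ θ, Q θ A ∂ρ + ENNReal.ofReal ε := by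
        rw [lintegral_add_right _ measurable_const, lintegral_const, measure_univ, mul_one]

lemma tvDist_bind_le_mul_add (hPm : Measurable P) (hQm : Measurable Q)
    (hP : ∀ θ, IsProbabilityMeasure (P θ)) (hQ : ∀ θ, IsProbabilityMeasure (Q θ))
    (hβ : 0 ≤ β) (hD : ∀ θ ζ, tvDist (P θ) (P ζ) ≤ β)
    (hε : 0 ≤ ε) (hPQ : ∀ θ, tvDist (Q θ) (P θ) ≤ ε)
    [IsProbabilityMeasure μ] [IsProbabilityMeasure ρ] (hinv : μ.bind P = μ) :
    tvDist μ (ρ.bind Q) ≤ β * tvDist μ ρ + ε := by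
  have := isProbabilityMeasure_bind (m := ρ) hPm.aemeasurable (ae_of_all _ hP)
  have := isProbabilityMeasure_bind (m := ρ) hQm.aemeasurable (ae_of_all _ hQ)
  calc tvDist μ (ρ.bind Q) ≤ tvDist μ (ρ.bind P) + tvDist (ρ.bind P) (ρ.bind Q) :=
        tvDist_triangle
    _ ≤ β * tvDist μ ρ + ε := by
        gcongr
        · nth_rewrite 1 [← hinv]
          exact tvDist_bind_le_mul_of_doeblin hPm hP hβ hD
        · exact tvDist_bind_le_of_forall_tvDist_le hPm hQm hP hQ hε hPQ

lemma isProbabilityMeasure_iterBind {Ps : ℕ → Θ → Measure Θ} (hPm : ∀ t, Measurable (Ps t))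
    (hP : ∀ t θ, IsProbabilityMeasure (Ps t θ)) (ν : Measure Θ) [IsProbabilityMeasure ν] :
    ∀ t, IsProbabilityMeasure (iterBind ν Ps t)
  | 0 => ‹_›
  | t + 1 =>
    have := isProbabilityMeasure_iterBind hPm hP ν t
    isProbabilityMeasure_bind (hPm _).aemeasurable (ae_of_all _ (hP _))

end Markov

lemma le_pow_mul_add_of_le_mul_add {d : ℕ → ℝ} {α ε : ℝ} (hα0 : α ≠ 0) (hα1 : α ≤ 1)
    (h : ∀ t, d (t + 1) ≤ (1 - α) * d t + ε) (t : ℕ) :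
    d t ≤ (1 - α) ^ t * d 0 + ε * (1 - (1 - α) ^ t) / α := by
  induction t with
  | zero => simp
  | succ t ih =>
    calc d (t + 1) ≤ (1 - α) * ((1 - α) ^ t * d 0 + ε * (1 - (1 - α) ^ t) / α) + ε :=
          (h t).trans (by gcongr)
      _ = (1 - α) ^ (t + 1) * d 0 + ε * (1 - (1 - α) ^ (t + 1)) / α := by
          field_simp
          ring

lemma inv_mul_sum_range_pow_mul_add {α ε D : ℝ} (hα : α ≠ 0) {M : ℕ} (hM : M ≠ 0) :
    (M : ℝ)⁻¹ * ∑ t ∈ range M, ((1 - α) ^ t * D + ε * (1 - (1 - α) ^ t) / α) =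
      (1 - (1 - α) ^ M) * D / (M * α) - ε * (1 - (1 - α) ^ M) / (M * α ^ 2) + ε / α := by
  have hgeom : ∑ t ∈ range M, (1 - α) ^ t = (1 - (1 - α) ^ M) / α := by
    rw [eq_div_iff hα]
    linarith [geom_sum_mul (1 - α) M]
  simp_rw [mul_sub, sub_div, sum_add_distrib, sum_sub_distrib, ← sum_mul, ← sum_div, ← mul_sum,
    hgeom, sum_const, card_range, nsmul_eq_mul]
  field_simp
  ring

theorem stmt6 {Θ : Type*} [MeasurableSpace Θ]
    (P : Θ → Measure Θ) (hPmeas : Measurable P)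
    (hP : ∀ θ, IsProbabilityMeasure (P θ))
    (α : ℝ) (hα0 : 0 < α) (hα1 : α < 1)
    (hDoeblin : ∀ θ ζ : Θ, tvDist (P θ) (P ζ) ≤ 1 - α)
    (Phat : ℕ → Θ → Measure Θ) (hPhatmeas : ∀ t, Measurable (Phat t))
    (hPhat : ∀ t θ, IsProbabilityMeasure (Phat t θ))
    (ε : ℝ) (hε0 : 0 ≤ ε)
    (hclose : ∀ t θ, tvDist (Phat t θ) (P θ) ≤ ε)
    (μ ν : Measure Θ) [IsProbabilityMeasure μ] [IsProbabilityMeasure ν]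
    (hinv : μ.bind P = μ)
    (M : ℕ) (hM : 1 ≤ M) :
    tvDist μ ((M : ENNReal)⁻¹ • ∑ t ∈ Finset.range M, iterBind ν Phat t) ≤
      (1 - (1 - α) ^ M) * tvDist μ ν / (M * α)
        - ε * (1 - (1 - α) ^ M) / (M * α ^ 2) + ε / α := by
  have := isProbabilityMeasure_iterBind hPhatmeas hPhat ν
  have hdist : ∀ t, tvDist μ (iterBind ν Phat t) ≤
      (1 - α) ^ t * tvDist μ ν + ε * (1 - (1 - α) ^ t) / α :=
    le_pow_mul_add_of_le_mul_add (d := fun t => tvDist μ (iterBind ν Phat t)) hα0.ne' hα1.le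
      fun t => tvDist_bind_le_mul_add hPmeas (hPhatmeas _) hP (hPhat _) (sub_nonneg.2 hα1.le)
        hDoeblin hε0 (hclose _) hinv
  calc tvDist μ ((M : ENNReal)⁻¹ • ∑ t ∈ range M, iterBind ν Phat t)
      ≤ (M : ℝ)⁻¹ * ∑ t ∈ range M, tvDist μ (iterBind ν Phat t) := by
        simpa using tvDist_inv_card_smul_sum_le (μ := μ) (nonempty_range_iff.2 (by omega))
          (iterBind ν Phat)
    _ ≤ (M : ℝ)⁻¹ * ∑ t ∈ range M,
          ((1 - α) ^ t * tvDist μ ν + ε * (1 - (1 - α) ^ t) / α) := by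
        gcongr with t
        exact hdist t
    _ = _ := inv_mul_sum_range_pow_mul_add hα0.ne' (by omega)
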